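/- For any smooth rapidly decaying solution u of the KdV equation u_t + ε·u·u_x + μ·u_xxx = 0 with ε ≠ 0, the quantity C₄ = ∫_{-∞}^{∞} (u⁴ − 12(μ/ε)·u·(u_x)² + 7.2(μ/ε)²·(u_xx)²) dx is conserved: dC₄/dt = 0. -/

import Mathlib

open MeasureTheory Filter

noncomputable def pxK (f : ℝ × ℝ → ℝ) : ℝ × ℝ → ℝ := fun p => fderiv ℝ f p (1, 0)
noncomputable def ptK (f : ℝ × ℝ → ℝ) : ℝ × ℝ → ℝ := fun p => fderiv ℝ f p (0, 1)

lemma pxK_smooth {f : ℝ × ℝ → ℝ} (hf : ContDiff ℝ (⊤ : ℕ∞) f) : ContDiff ℝ (⊤ : ℕ∞) (pxK f) :=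
  (hf.fderiv_right (by simp)).clm_apply contDiff_const

lemma pxK_iter_smooth {f : ℝ × ℝ → ℝ} (hf : ContDiff ℝ (⊤ : ℕ∞) f) (k : ℕ) :
    ContDiff ℝ (⊤ : ℕ∞) (pxK^[k] f) := by
  induction k with
  | zero => simpa using hf
  | succ k ih => rw [Function.iterate_succ_apply']; exact pxK_smooth ih

lemma hasDerivAt_pxK {f : ℝ × ℝ → ℝ} (hf : ContDiff ℝ (⊤ : ℕ∞) f) (x t : ℝ) :
    HasDerivAt (fun y => f (y, t)) (pxK f (x, t)) x := by
  have h := (hf.differentiable (by simp) (x, t)).hasFDerivAt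
  have hg : HasDerivAt (fun y : ℝ => (y, t)) ((1 : ℝ), (0 : ℝ)) x :=
    HasDerivAt.prodMk (hasDerivAt_id x) (hasDerivAt_const x t)
  exact h.comp_hasDerivAt x hg

lemma hasDerivAt_ptK {f : ℝ × ℝ → ℝ} (hf : ContDiff ℝ (⊤ : ℕ∞) f) (x t : ℝ) :
    HasDerivAt (fun τ => f (x, τ)) (ptK f (x, t)) t := by
  have h := (hf.differentiable (by simp) (x, t)).hasFDerivAt
  have hg : HasDerivAt (fun τ : ℝ => (x, τ)) ((0 : ℝ), (1 : ℝ)) t :=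
    HasDerivAt.prodMk (hasDerivAt_const t x) (hasDerivAt_id t)
  exact h.comp_hasDerivAt t hg

lemma ptK_pxK {f : ℝ × ℝ → ℝ} (hf : ContDiff ℝ (⊤ : ℕ∞) f) : ptK (pxK f) = pxK (ptK f) := by
  funext p
  have hd : ∀ y, HasFDerivAt f (fderiv ℝ f y) y := fun y => (hf.differentiable (by simp) y).hasFDerivAt
  have h2 : HasFDerivAt (fderiv ℝ f) (fderiv ℝ (fderiv ℝ f) p) p :=
    (((hf.fderiv_right (m := (⊤ : ℕ∞)) (by simp)).differentiable (by simp)) p).hasFDerivAt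
  have hsymm := second_derivative_symmetric hd h2 ((1:ℝ), (0:ℝ)) ((0:ℝ), (1:ℝ))
  have hA : ∀ v : ℝ × ℝ, HasFDerivAt (fun q => fderiv ℝ f q v)
      ((ContinuousLinearMap.apply ℝ ℝ v).comp (fderiv ℝ (fderiv ℝ f) p)) p := fun v =>
    (ContinuousLinearMap.apply ℝ ℝ v).hasFDerivAt.comp p h2
  have e1 : ptK (pxK f) p = fderiv ℝ (fderiv ℝ f) p ((0:ℝ),(1:ℝ)) ((1:ℝ),(0:ℝ)) := by
    have h := (hA ((1:ℝ),(0:ℝ))).fderiv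
    show fderiv ℝ (pxK f) p ((0:ℝ),(1:ℝ)) = _
    rw [show pxK f = fun q => fderiv ℝ f q ((1:ℝ),(0:ℝ)) from rfl, h]
    rfl
  have e2 : pxK (ptK f) p = fderiv ℝ (fderiv ℝ f) p ((1:ℝ),(0:ℝ)) ((0:ℝ),(1:ℝ)) := by
    have h := (hA ((0:ℝ),(1:ℝ))).fderiv
    show fderiv ℝ (ptK f) p ((1:ℝ),(0:ℝ)) = _
    rw [show ptK f = fun q => fderiv ℝ f q ((0:ℝ),(1:ℝ)) from rfl, h]
    rfl
  rw [e1, e2, hsymm]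

lemma iteratedDeriv_slice {f : ℝ × ℝ → ℝ} (hf : ContDiff ℝ (⊤ : ℕ∞) f) (k : ℕ) (t : ℝ) (x : ℝ) :
    iteratedDeriv k (fun y => f (y, t)) x = (pxK^[k] f) (x, t) := by
  induction k generalizing x with
  | zero => simp
  | succ k ih =>
    rw [iteratedDeriv_succ]
    have h1 : iteratedDeriv k (fun y => f (y, t)) = fun y => (pxK^[k] f) (y, t) :=
      funext fun y => ih y
    rw [h1, Function.iterate_succ_apply']
    exact (hasDerivAt_pxK (pxK_iter_smooth hf k) x t).deriv

/-- The spatial expression equal to `u_t` via the KdV equation. -/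
@[reducible] noncomputable def WK (ε μ : ℝ) (U : ℝ × ℝ → ℝ) : ℝ × ℝ → ℝ :=
  fun p => -(ε * U p * pxK U p + μ * pxK (pxK (pxK U)) p)

lemma WK_apply (ε μ : ℝ) (U : ℝ × ℝ → ℝ) (p : ℝ × ℝ) :
    WK ε μ U p = -(ε * U p * pxK U p + μ * pxK (pxK (pxK U)) p) := rfl

lemma WK_smooth (ε μ : ℝ) {U : ℝ × ℝ → ℝ} (hU : ContDiff ℝ (⊤ : ℕ∞) U) :
    ContDiff ℝ (⊤ : ℕ∞) (WK ε μ U) :=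
  (((contDiff_const.mul hU).mul (pxK_smooth hU)).add
    (contDiff_const.mul (pxK_smooth (pxK_smooth (pxK_smooth hU))))).neg

lemma pxK_WK (ε μ : ℝ) {U : ℝ × ℝ → ℝ} (hU : ContDiff ℝ (⊤ : ℕ∞) U) (p : ℝ × ℝ) :
    pxK (WK ε μ U) p =
      -((ε * pxK U p * pxK U p + ε * U p * pxK (pxK U) p)
        + μ * pxK (pxK (pxK (pxK U))) p) := by
  obtain ⟨x, t⟩ := p
  have hc : HasDerivAt (fun y => WK ε μ U (y, t))
      (-((ε * pxK U (x,t) * pxK U (x,t) + ε * Function.uncurry (fun a b => U (a,b)) (x,t) * pxK (pxK U) (x,t))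
        + μ * pxK (pxK (pxK (pxK U))) (x,t))) x :=
    ((((hasDerivAt_pxK hU x t).const_mul ε).mul (hasDerivAt_pxK (pxK_smooth hU) x t)).add
      ((hasDerivAt_pxK (pxK_smooth (pxK_smooth (pxK_smooth hU))) x t).const_mul μ)).neg
  rw [(hasDerivAt_pxK (WK_smooth ε μ hU) x t).unique hc]
  rfl

lemma pxK_pxK_WK (ε μ : ℝ) {U : ℝ × ℝ → ℝ} (hU : ContDiff ℝ (⊤ : ℕ∞) U) (p : ℝ × ℝ) :
    pxK (pxK (WK ε μ U)) p =
      -(ε * (3 * (pxK U p * pxK (pxK U) p)) + ε * (U p * pxK (pxK (pxK U)) p)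
        + μ * pxK (pxK (pxK (pxK (pxK U)))) p) := by
  have hfun : pxK (WK ε μ U) = fun q =>
      -((ε * pxK U q * pxK U q + ε * U q * pxK (pxK U) q)
        + μ * pxK (pxK (pxK (pxK U))) q) := funext (pxK_WK ε μ hU)
  rw [hfun]
  obtain ⟨x, t⟩ := p
  have hQs : ContDiff ℝ (⊤ : ℕ∞) (fun q : ℝ × ℝ =>
      -((ε * pxK U q * pxK U q + ε * U q * pxK (pxK U) q)
        + μ * pxK (pxK (pxK (pxK U))) q)) :=
    ((((contDiff_const.mul (pxK_smooth hU)).mul (pxK_smooth hU)).add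
        ((contDiff_const.mul hU).mul (pxK_smooth (pxK_smooth hU)))).add
      (contDiff_const.mul (pxK_smooth (pxK_smooth (pxK_smooth (pxK_smooth hU)))))).neg
  have hc : HasDerivAt (fun y => -((ε * pxK U (y,t) * pxK U (y,t) + ε * U (y,t) * pxK (pxK U) (y,t))
        + μ * pxK (pxK (pxK (pxK U))) (y,t)))
      (-(((ε * pxK (pxK U) (x,t)) * pxK U (x,t) + (ε * pxK U (x,t)) * pxK (pxK U) (x,t)
        + ((ε * pxK U (x,t)) * pxK (pxK U) (x,t) + (ε * U (x,t)) * pxK (pxK (pxK U)) (x,t)))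
        + μ * pxK (pxK (pxK (pxK (pxK U)))) (x,t))) x :=
    (((((hasDerivAt_pxK (pxK_smooth hU) x t).const_mul ε).mul
          (hasDerivAt_pxK (pxK_smooth hU) x t)).add
        (((hasDerivAt_pxK hU x t).const_mul ε).mul
          (hasDerivAt_pxK (pxK_smooth (pxK_smooth hU)) x t))).add
      ((hasDerivAt_pxK (pxK_smooth (pxK_smooth (pxK_smooth (pxK_smooth hU)))) x t).const_mul μ)).neg
  rw [(hasDerivAt_pxK hQs x t).unique hc]
  ring

/-- The conserved-density flux for `C₄`. -/
@[reducible] noncomputable def GK (ε μ : ℝ) (U : ℝ × ℝ → ℝ) : ℝ × ℝ → ℝ := fun p =>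
  (-(4*ε/5)) * U p ^ 5 - (4*μ) * (U p ^ 3 * pxK (pxK U) p)
    + (18*μ) * (U p ^ 2 * pxK U p ^ 2)
    + ((μ/ε)*μ) * ((-12 : ℝ) * (pxK U p ^ 2 * pxK (pxK U) p)
        + (24 : ℝ) * (U p * pxK U p * pxK (pxK (pxK U)) p)
        + (-19.2 : ℝ) * (U p * pxK (pxK U) p ^ 2))
    + ((μ/ε)^2*μ) * ((-14.4 : ℝ) * (pxK (pxK U) p * pxK (pxK (pxK (pxK U))) p)
        + (7.2 : ℝ) * (pxK (pxK (pxK U)) p ^ 2))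

/-- For a smooth rapidly decaying solution of the KdV equation
`u_t + ε u u_x + μ u_xxx = 0` with `ε ≠ 0`, the quantity
`C₄ = ∫ (u⁴ − 12(μ/ε) u (u_x)² + 7.2(μ/ε)² (u_xx)²) dx` is conserved. -/
theorem kdv_conserved_C4 (ε μ : ℝ) (hε : ε ≠ 0) (u : ℝ → ℝ → ℝ)
    (F : ℝ → ℝ → ℝ)
    (hF : ∀ x t, F x t = (u x t) ^ 4
        - 12 * (μ / ε) * u x t * (deriv (fun y => u y t) x) ^ 2
        + 7.2 * (μ / ε) ^ 2 * (iteratedDeriv 2 (fun y => u y t) x) ^ 2)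
    (hsm : ContDiff ℝ (⊤ : ℕ∞) (Function.uncurry u))
    (hKdV : ∀ x t, deriv (fun τ => u x τ) t
        + ε * u x t * deriv (fun y => u y t) x
        + μ * iteratedDeriv 3 (fun y => u y t) x = 0)
    (hint : ∀ t, Integrable (fun x => F x t))
    (hint' : ∀ t, Integrable (fun x => deriv (fun τ => F x τ) t))
    (hswap : ∀ t, HasDerivAt (fun s => ∫ x : ℝ, F x s)
        (∫ x : ℝ, deriv (fun τ => F x τ) t) t)
    (hdecay : ∀ t : ℝ, ∀ k ≤ 5,
        Tendsto (fun x => iteratedDeriv k (fun y => u y t) x) atTop (nhds 0) ∧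
        Tendsto (fun x => iteratedDeriv k (fun y => u y t) x) atBot (nhds 0)) :
    ∀ t : ℝ, deriv (fun s => ∫ x : ℝ, F x s) t = 0 := by
  have hptU : ptK (Function.uncurry u) = WK ε μ (Function.uncurry u) := by
    funext p
    obtain ⟨x, t⟩ := p
    have e0 : deriv (fun τ => u x τ) t = ptK (Function.uncurry u) (x, t) :=
      (hasDerivAt_ptK hsm x t).deriv
    have e1 : deriv (fun y => u y t) x = pxK (Function.uncurry u) (x, t) :=
      (hasDerivAt_pxK hsm x t).deriv
    have e3 : iteratedDeriv 3 (fun y => u y t) x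
        = pxK (pxK (pxK (Function.uncurry u))) (x, t) := iteratedDeriv_slice hsm 3 t x
    have h := hKdV x t
    rw [e0, e1, e3] at h
    rw [WK_apply, show Function.uncurry u (x, t) = u x t from rfl]
    linarith
  have hcomm1 : ptK (pxK (Function.uncurry u)) = pxK (WK ε μ (Function.uncurry u)) := by
    rw [ptK_pxK hsm, hptU]
  have hcomm2 : ptK (pxK (pxK (Function.uncurry u)))
      = pxK (pxK (WK ε μ (Function.uncurry u))) := by
    rw [ptK_pxK (pxK_smooth hsm), ptK_pxK hsm, hptU]
  have hdecK : ∀ t : ℝ, ∀ k : ℕ, k ≤ 5 →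
      Tendsto (fun x => (pxK^[k] (Function.uncurry u)) (x, t)) atTop (nhds 0) ∧
      Tendsto (fun x => (pxK^[k] (Function.uncurry u)) (x, t)) atBot (nhds 0) := by
    intro t k hk
    have h := hdecay t k hk
    have hfun : (fun x => iteratedDeriv k (fun y => u y t) x)
        = fun x => (pxK^[k] (Function.uncurry u)) (x, t) :=
      funext fun x => iteratedDeriv_slice hsm k t x
    rwa [hfun] at h
  have hFt : ∀ x : ℝ, (fun τ => F x τ) = fun τ =>
      Function.uncurry u (x, τ) ^ 4
        - 12 * (μ / ε) * Function.uncurry u (x, τ) * pxK (Function.uncurry u) (x, τ) ^ 2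
        + 7.2 * (μ / ε) ^ 2 * pxK (pxK (Function.uncurry u)) (x, τ) ^ 2 := by
    intro x
    funext τ
    have e1 : deriv (fun y => u y τ) x = pxK (Function.uncurry u) (x, τ) :=
      (hasDerivAt_pxK hsm x τ).deriv
    have e2 : iteratedDeriv 2 (fun y => u y τ) x
        = pxK (pxK (Function.uncurry u)) (x, τ) := iteratedDeriv_slice hsm 2 τ x
    rw [hF x τ, e1, e2]
    rfl
  intro t
  rw [(hswap t).deriv]
  -- x-direction slice derivatives
  have h0 := fun x => hasDerivAt_pxK hsm x t
  have h1 := fun x => hasDerivAt_pxK (pxK_smooth hsm) x t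
  have h2 := fun x => hasDerivAt_pxK (pxK_smooth (pxK_smooth hsm)) x t
  have h3 := fun x => hasDerivAt_pxK (pxK_smooth (pxK_smooth (pxK_smooth hsm))) x t
  have h4 := fun x => hasDerivAt_pxK (pxK_smooth (pxK_smooth (pxK_smooth (pxK_smooth hsm)))) x t
  have key : ∀ x : ℝ, HasDerivAt (fun y => GK ε μ (Function.uncurry u) (y, t))
      (deriv (fun τ => F x τ) t) x := by
    intro x
    have hdt0 : HasDerivAt (fun τ => Function.uncurry u (x, τ))
        (WK ε μ (Function.uncurry u) (x, t)) t := by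
      have h := hasDerivAt_ptK hsm x t; rwa [hptU] at h
    have hdt1 : HasDerivAt (fun τ => pxK (Function.uncurry u) (x, τ))
        (pxK (WK ε μ (Function.uncurry u)) (x, t)) t := by
      have h := hasDerivAt_ptK (pxK_smooth hsm) x t; rwa [hcomm1] at h
    have hdt2 : HasDerivAt (fun τ => pxK (pxK (Function.uncurry u)) (x, τ))
        (pxK (pxK (WK ε μ (Function.uncurry u))) (x, t)) t := by
      have h := hasDerivAt_ptK (pxK_smooth (pxK_smooth hsm)) x t; rwa [hcomm2] at h
    have hct := ((hdt0.pow 4).sub ((hdt0.const_mul (12 * (μ / ε))).mul (hdt1.pow 2))).add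
      ((hdt2.pow 2).const_mul (7.2 * (μ / ε) ^ 2))
    have hGc := (((((h0 x).pow 5).const_mul (-(4*ε/5))).sub
          ((((h0 x).pow 3).mul (h2 x)).const_mul (4*μ))).add
        ((((h0 x).pow 2).mul ((h1 x).pow 2)).const_mul (18*μ))).add
      (((((((h1 x).pow 2).mul (h2 x)).const_mul (-12 : ℝ)).add
            ((((h0 x).mul (h1 x)).mul (h3 x)).const_mul (24 : ℝ))).add
          (((h0 x).mul ((h2 x).pow 2)).const_mul (-19.2 : ℝ))).const_mul ((μ/ε)*μ)) |>.add
      (((((h2 x).mul (h4 x)).const_mul (-14.4 : ℝ)).add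
          (((h3 x).pow 2).const_mul (7.2 : ℝ))).const_mul ((μ/ε)^2*μ))
    refine hGc.congr_deriv (Eq.symm ?_)
    rw [hFt x]
    refine hct.deriv.trans ?_
    rw [pxK_pxK_WK ε μ hsm, pxK_WK ε μ hsm, WK_apply]
    push_cast
    simp only [Pi.pow_apply, Pi.mul_apply]
    field_simp
    ring
  have htop : Tendsto (fun x => GK ε μ (Function.uncurry u) (x, t)) atTop (nhds 0) := by
    have d0 := (hdecK t 0 (by norm_num)).1
    have d1 := (hdecK t 1 (by norm_num)).1
    have d2 := (hdecK t 2 (by norm_num)).1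
    have d3 := (hdecK t 3 (by norm_num)).1
    have d4 := (hdecK t 4 (by norm_num)).1
    have T := ((((d0.pow 5).const_mul (-(4*ε/5))).sub
          (((d0.pow 3).mul d2).const_mul (4*μ))).add
        (((d0.pow 2).mul (d1.pow 2)).const_mul (18*μ))).add
      ((((((d1.pow 2).mul d2).const_mul (-12 : ℝ)).add
            (((d0.mul d1).mul d3).const_mul (24 : ℝ))).add
          ((d0.mul (d2.pow 2)).const_mul (-19.2 : ℝ))).const_mul ((μ/ε)*μ)) |>.add
      ((((d2.mul d4).const_mul (-14.4 : ℝ)).add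
          ((d3.pow 2).const_mul (7.2 : ℝ))).const_mul ((μ/ε)^2*μ))
    have hz : (-(4*ε/5)) * (0:ℝ) ^ 5 - (4*μ) * ((0:ℝ) ^ 3 * 0)
        + (18*μ) * ((0:ℝ) ^ 2 * (0:ℝ) ^ 2)
        + ((μ/ε)*μ) * ((-12 : ℝ) * ((0:ℝ) ^ 2 * 0) + (24 : ℝ) * ((0:ℝ) * 0 * 0)
            + (-19.2 : ℝ) * ((0:ℝ) * (0:ℝ) ^ 2))
        + ((μ/ε)^2*μ) * ((-14.4 : ℝ) * ((0:ℝ) * 0) + (7.2 : ℝ) * ((0:ℝ) ^ 2)) = 0 := by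
      norm_num
    rw [hz] at T
    exact T
  have hbot : Tendsto (fun x => GK ε μ (Function.uncurry u) (x, t)) atBot (nhds 0) := by
    have d0 := (hdecK t 0 (by norm_num)).2
    have d1 := (hdecK t 1 (by norm_num)).2
    have d2 := (hdecK t 2 (by norm_num)).2
    have d3 := (hdecK t 3 (by norm_num)).2
    have d4 := (hdecK t 4 (by norm_num)).2
    have T := ((((d0.pow 5).const_mul (-(4*ε/5))).sub
          (((d0.pow 3).mul d2).const_mul (4*μ))).add
        (((d0.pow 2).mul (d1.pow 2)).const_mul (18*μ))).add
      ((((((d1.pow 2).mul d2).const_mul (-12 : ℝ)).add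
            (((d0.mul d1).mul d3).const_mul (24 : ℝ))).add
          ((d0.mul (d2.pow 2)).const_mul (-19.2 : ℝ))).const_mul ((μ/ε)*μ)) |>.add
      ((((d2.mul d4).const_mul (-14.4 : ℝ)).add
          ((d3.pow 2).const_mul (7.2 : ℝ))).const_mul ((μ/ε)^2*μ))
    have hz : (-(4*ε/5)) * (0:ℝ) ^ 5 - (4*μ) * ((0:ℝ) ^ 3 * 0)
        + (18*μ) * ((0:ℝ) ^ 2 * (0:ℝ) ^ 2)
        + ((μ/ε)*μ) * ((-12 : ℝ) * ((0:ℝ) ^ 2 * 0) + (24 : ℝ) * ((0:ℝ) * 0 * 0)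
            + (-19.2 : ℝ) * ((0:ℝ) * (0:ℝ) ^ 2))
        + ((μ/ε)^2*μ) * ((-14.4 : ℝ) * ((0:ℝ) * 0) + (7.2 : ℝ) * ((0:ℝ) ^ 2)) = 0 := by
      norm_num
    rw [hz] at T
    exact T
  have := integral_of_hasDerivAt_of_tendsto key (hint' t) hbot htop
  simpa using this
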